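/- arXiv:2102.13643 — 4 statements merged into one kernel-verified Lean document; each statement's English description precedes it below -/
import Mathlib

section
/- Let (A_k) be a sequence of nonnegative reals with A_0 = 0 and A_k = A_{k-1} + sqrt(c_1^2 + c_2 * A_{k-1}) for constants c_1 > 0 and c_2 > 0. Set K_0 = ceil(c_2/(9*c_1)). Then for all k > K_0, A_k ≥ (c_2/9) * (k - K_0 + max(3*sqrt(c_1/c_2), 1))^2. -/
theorem stmt_1 (c₁ c₂ : ℝ) (hc₁ : 0 < c₁) (hc₂ : 0 < c₂)
    (A : ℕ → ℝ) (hA : ∀ k, 0 ≤ A k) (hA0 : A 0 = 0)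
    (hrec : ∀ k, A (k + 1) = A k + Real.sqrt (c₁ ^ 2 + c₂ * A k))
    (K₀ : ℕ) (hK₀ : K₀ = ⌈c₂ / (9 * c₁)⌉₊) :
    ∀ k : ℕ, k > K₀ →
      A k ≥ (c₂ / 9) * ((k : ℝ) - K₀ + max (3 * Real.sqrt (c₁ / c₂)) 1) ^ 2 := by
  set B : ℝ := max (3 * Real.sqrt (c₁ / c₂)) 1 with hB
  have hB1 : (1 : ℝ) ≤ B := le_max_right _ _
  -- linear lower bound
  have hlin : ∀ k : ℕ, (k : ℝ) * c₁ ≤ A k := by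
    intro k
    induction k with
    | zero => simp [hA0]
    | succ n ih =>
      rw [hrec n]
      have h1 : c₁ ≤ Real.sqrt (c₁ ^ 2 + c₂ * A n) := by
        have hnn : 0 ≤ c₁ ^ 2 + c₂ * A n :=
          add_nonneg (sq_nonneg _) (mul_nonneg hc₂.le (hA n))
        rw [Real.le_sqrt hc₁.le]
        · nlinarith [hA n]
        · exact hnn
      push_cast
      nlinarith
  -- K₀ ≥ c₂/(9c₁)
  have hK₀ge : c₂ / (9 * c₁) ≤ (K₀ : ℝ) := hK₀ ▸ Nat.le_ceil _
  have hK₀1 : 1 ≤ K₀ := by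
    rw [hK₀, Nat.one_le_ceil_iff]
    positivity
  -- base case
  have hbase : c₂ / 9 * B ^ 2 ≤ A K₀ := by
    rcases max_cases (3 * Real.sqrt (c₁ / c₂)) 1 with ⟨hm, _⟩ | ⟨hm, hle⟩
    · have hsq : Real.sqrt (c₁ / c₂) ^ 2 = c₁ / c₂ :=
        Real.sq_sqrt (by positivity)
      have h3 : (3 * Real.sqrt (c₁ / c₂)) ^ 2 = 9 * (c₁ / c₂) := by
        rw [mul_pow, hsq]; ring
      have hval : c₂ / 9 * B ^ 2 = c₁ := by
        rw [hB, hm, h3]; field_simp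
      rw [hval]
      calc c₁ = (1 : ℝ) * c₁ := by ring
        _ ≤ (K₀ : ℝ) * c₁ := by
            apply mul_le_mul_of_nonneg_right _ hc₁.le
            exact_mod_cast hK₀1
        _ ≤ A K₀ := hlin K₀
    · rw [hB, hm]
      have h1 : c₂ / 9 ≤ (K₀ : ℝ) * c₁ := by
        rw [div_le_iff₀ (by positivity : (0:ℝ) < 9 * c₁)] at hK₀ge
        nlinarith
      calc c₂ / 9 * 1 ^ 2 = c₂ / 9 := by ring
        _ ≤ (K₀ : ℝ) * c₁ := h1
        _ ≤ A K₀ := hlin K₀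
  -- main induction
  have hmain : ∀ n : ℕ, c₂ / 9 * ((n : ℝ) + B) ^ 2 ≤ A (K₀ + n) := by
    intro n
    induction n with
    | zero => simpa using hbase
    | succ n ih =>
      have hx1 : (1 : ℝ) ≤ (n : ℝ) + B := by
        have : (0 : ℝ) ≤ (n : ℝ) := Nat.cast_nonneg n
        linarith
      set x : ℝ := (n : ℝ) + B with hxdef
      have hxpos : 0 < x := by linarith
      have hsqrt : c₂ * x / 3 ≤ Real.sqrt (c₁ ^ 2 + c₂ * A (K₀ + n)) := by
        rw [Real.le_sqrt (by positivity)]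
        · nlinarith [ih, sq_nonneg c₁, mul_nonneg hc₂.le (hA (K₀ + n))]
        · exact add_nonneg (sq_nonneg _) (mul_nonneg hc₂.le (hA (K₀ + n)))
      have heq : K₀ + (n + 1) = (K₀ + n) + 1 := by ring
      rw [heq, hrec (K₀ + n)]
      have hcast : ((n : ℕ) + 1 : ℕ) = (n : ℝ) + 1 := by push_cast; ring
      push_cast
      nlinarith [ih, hsqrt]
  intro k hk
  obtain ⟨n, rfl⟩ : ∃ n, k = K₀ + n := ⟨k - K₀, by omega⟩
  have := hmain n
  have hcast : ((K₀ + n : ℕ) : ℝ) - (K₀ : ℝ) = (n : ℝ) := by push_cast; ring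
  rw [ge_iff_le, hcast]
  linarith
end

section
/- Suppose p > 0, q ≥ 1, k_0 is a positive integer, and a real sequence (A_k) satisfies A_{k_0} ≥ p*q^2 and the recursion A_k ≥ A_{k-1} + sqrt(9*p*A_{k-1}) for all k > k_0. Then A_k ≥ p*(k - k_0 + q)^2 for all k ≥ k_0. -/
theorem stmt_2 (p q : ℝ) (hp : 0 < p) (hq : 1 ≤ q)
    (k₀ : ℕ) (hk₀ : 1 ≤ k₀)
    (A : ℕ → ℝ) (hA : ∀ k, 0 ≤ A k)
    (hinit : A k₀ ≥ p * q ^ 2)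
    (hrec : ∀ k, k₀ ≤ k → A (k + 1) ≥ A k + Real.sqrt (9 * p * A k)) :
    ∀ k : ℕ, k₀ ≤ k → A k ≥ p * ((k : ℝ) - k₀ + q) ^ 2 := by
  intro k hk
  induction k, hk using Nat.le_induction with
  | base => simpa using hinit
  | succ k hk ih =>
    set t : ℝ := (k : ℝ) - k₀ + q with ht
    have htk : (1:ℝ) ≤ t := by
      have : (k₀ : ℝ) ≤ (k : ℝ) := by exact_mod_cast hk
      simp only [ht]; linarith
    have ht0 : 0 ≤ t := by linarith
    have hsq : Real.sqrt (9 * p * A k) ≥ 3 * p * t := by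
      have h1 : (3 * p * t) ^ 2 ≤ 9 * p * A k := by
        have : p * t ^ 2 ≤ A k := ih
        nlinarith
      calc 3 * p * t = Real.sqrt ((3 * p * t) ^ 2) := by
            rw [Real.sqrt_sq (by positivity)]
        _ ≤ Real.sqrt (9 * p * A k) := Real.sqrt_le_sqrt h1
    have hrec' := hrec k hk
    have : A (k + 1) ≥ p * t ^ 2 + 3 * p * t := by linarith
    have hcast : ((k + 1 : ℕ) : ℝ) = (k : ℝ) + 1 := by push_cast; ring
    rw [hcast]
    have : p * ((k : ℝ) + 1 - k₀ + q) ^ 2 = p * (t + 1) ^ 2 := by rw [ht]; ring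
    rw [this]
    nlinarith
end

section
/- Let n ≥ 2 be an integer, σ > 0, R' > 0, c = (n-1)^2*σ/((4R')^2*n), and let (A_k) for k ≥ k_0 satisfy A_{k_0} ≥ 4*c*n^2 and A_{k+1} = A_k + sqrt(n^2 + n*σ*A_k)/(2R') for all k ≥ k_0. Then A_k ≥ c*(k - k_0 + n - 1)^2 for all k ≥ k_0. -/
set_option maxHeartbeats 1000000 in
theorem stmt_8 (n : ℕ) (hn : 2 ≤ n) (σ R' : ℝ) (hσ : 0 < σ) (hR' : 0 < R')
    (c : ℝ) (hc : c = ((n : ℝ) - 1) ^ 2 * σ / ((4 * R') ^ 2 * n))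
    (k₀ : ℕ) (A : ℕ → ℝ)
    (hinit : A k₀ ≥ 4 * c * (n : ℝ) ^ 2)
    (hrec : ∀ k, k₀ ≤ k →
      A (k + 1) = A k + Real.sqrt ((n : ℝ) ^ 2 + n * σ * A k) / (2 * R')) :
    ∀ k, k₀ ≤ k → A k ≥ c * ((k : ℝ) - k₀ + n - 1) ^ 2 := by
  have hn1 : (1:ℝ) ≤ (n:ℝ) - 1 := by
    have h2 : (2:ℝ) ≤ (n:ℝ) := by exact_mod_cast hn
    linarith
  have hnpos : (0:ℝ) < n := by linarith
  have hcpos : 0 < c := by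
    rw [hc]
    apply div_pos
    · exact mul_pos (pow_pos (by linarith) 2) hσ
    · exact mul_pos (pow_pos (by positivity) 2) hnpos
  intro k hk
  induction k, hk using Nat.le_induction with
  | base =>
    have h1 : ((k₀:ℝ) - k₀ + n - 1) ^ 2 ≤ 4 * (n:ℝ) ^ 2 := by nlinarith
    nlinarith
  | succ k hk ih =>
    set m : ℝ := (k:ℝ) - k₀ + n - 1 with hm
    clear_value m
    have hmge : ((n:ℝ) - 1) ≤ m := by
      have : (k₀:ℝ) ≤ k := by exact_mod_cast hk
      rw [hm]; linarith
    have hm1 : (1:ℝ) ≤ m := le_trans hn1 hmge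
    have hAk : A k ≥ c * m ^ 2 := ih
    have hb : (0:ℝ) ≤ ((n:ℝ) - 1) * σ / (4 * R') * m := by positivity
    have hsqval : (((n:ℝ) - 1) * σ / (4 * R') * m) ^ 2 = (n:ℝ) * σ * (c * m ^ 2) := by
      rw [hc]; field_simp
    have harg : (((n:ℝ) - 1) * σ / (4 * R') * m) ^ 2 ≤ (n:ℝ) ^ 2 + n * σ * A k := by
      rw [hsqval]
      have h1 : (n:ℝ) * σ * (c * m ^ 2) ≤ (n:ℝ) * σ * A k :=
        mul_le_mul_of_nonneg_left hAk (by positivity)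
      nlinarith
    have hs : ((n:ℝ) - 1) * σ / (4 * R') * m ≤
        Real.sqrt ((n:ℝ) ^ 2 + n * σ * A k) := by
      calc ((n:ℝ) - 1) * σ / (4 * R') * m
          = Real.sqrt ((((n:ℝ) - 1) * σ / (4 * R') * m) ^ 2) := (Real.sqrt_sq hb).symm
        _ ≤ _ := Real.sqrt_le_sqrt harg
    have hrec' := hrec k hk
    have hstep : A (k + 1) ≥ c * m ^ 2 + ((n:ℝ) - 1) * σ / (4 * R') * m / (2 * R') := by
      rw [hrec']
      have h : ((n:ℝ) - 1) * σ / (4 * R') * m / (2 * R') ≤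
          Real.sqrt ((n:ℝ) ^ 2 + n * σ * A k) / (2 * R') := by gcongr
      linarith
    have hkey : c * (2 * m + 1) ≤ ((n:ℝ) - 1) * σ / (4 * R') * m / (2 * R') := by
      have expand : ((n:ℝ) - 1) * σ / (4 * R') * m / (2 * R') - c * (2 * m + 1)
          = σ / (16 * R' ^ 2 * n) * (((n:ℝ) - 1) * (2 * m * n - ((n:ℝ) - 1) * (2 * m + 1))) := by
        rw [hc]; field_simp; ring
      have h1 : (0:ℝ) ≤ 2 * m * n - ((n:ℝ) - 1) * (2 * m + 1) := by nlinarith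
      have h2 : (0:ℝ) ≤ σ / (16 * R' ^ 2 * n) * (((n:ℝ) - 1) * (2 * m * n - ((n:ℝ) - 1) * (2 * m + 1))) := by
        apply mul_nonneg (by positivity)
        exact mul_nonneg (by linarith) h1
      linarith
    have hcast : ((k + 1 : ℕ) : ℝ) - k₀ + n - 1 = m + 1 := by
      rw [hm]; push_cast; ring
    rw [hcast]
    have hexp : c * (m + 1) ^ 2 = c * m ^ 2 + c * (2 * m + 1) := by ring
    linarith
end

section
/- Let n ≥ 2 be an integer, σ ≥ 0, R' > 0, and suppose a > 0 and A ≥ 0 satisfy a*(1 + 1/(n-1)) ≤ sqrt(n*(n + σ*(A + a')))/(2R') where a' = sqrt(n*(n + σ*A))/(2R') and a = a'. Then a ≤ n*(n-1)^2*σ/((2R')^2*(2n-1)). -/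
/-!
Write `c = 2R'` and `q = 1 + 1/(n-1) = n/(n-1)`. The defining equation of `a` gives
`(a c)² = n(n + σA)`, so squaring the growth constraint leaves
`(a c)² q² ≤ (a c)² + nσ a`. Dividing by `a > 0` yields `a c² (q² - 1) ≤ nσ`, and
`q² - 1 = (2n-1)/(n-1)²`.
-/

lemma mul_sq_mul_sq_sub_one_le {a b c q B : ℝ} (ha : 0 < a) (hc : 0 < c) (hq : 0 < q)
    (hB : √B = a * c) (h : a * q ≤ √(B + b * a) / c) : a * c ^ 2 * (q ^ 2 - 1) ≤ b := by
  have hB' : a * c * (a * c) = B :=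
    (Real.sqrt_eq_iff_mul_self_eq_of_pos (by positivity)).mp hB
  have hsq : (a * q * c) ^ 2 ≤ B + b * a :=
    (Real.le_sqrt' (by positivity)).mp ((le_div_iff₀ hc).mp h)
  have : a * (a * c ^ 2 * (q ^ 2 - 1)) ≤ a * b := by linear_combination hsq - hB'
  exact le_of_mul_le_mul_left this ha

lemma one_add_one_div_sub_one_sq_sub_one {K : Type*} [Field K] {x : K} (hx : x ≠ 1) :
    (1 + 1 / (x - 1)) ^ 2 - 1 = (2 * x - 1) / (x - 1) ^ 2 := by
  have : x - 1 ≠ 0 := sub_ne_zero.mpr hx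
  field_simp
  ring

theorem stmt_16_general (n : ℕ) (hn : 2 ≤ n) (σ R' : ℝ) (hR' : 0 < R')
    (a A : ℝ) (ha : 0 < a)
    (haval : a = Real.sqrt (n * (n + σ * A)) / (2 * R'))
    (h : a * (1 + 1 / ((n : ℝ) - 1)) ≤
      Real.sqrt (n * (n + σ * (A + a))) / (2 * R')) :
    a ≤ n * ((n : ℝ) - 1) ^ 2 * σ / ((2 * R') ^ 2 * (2 * n - 1)) := by
  have hn' : (1 : ℝ) < n := by exact_mod_cast hn
  have hc : 0 < 2 * R' := by positivity
  have hn1 : 0 < (n : ℝ) - 1 := by linarith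
  have hq : 0 < 1 + 1 / ((n : ℝ) - 1) := by positivity
  have hB : √(n * (n + σ * A)) = a * (2 * R') := by rw [haval, div_mul_cancel₀ _ hc.ne']
  rw [show (n : ℝ) * (n + σ * (A + a)) = n * (n + σ * A) + n * σ * a by ring] at h
  have key := mul_sq_mul_sq_sub_one_le ha hc hq hB h
  rw [one_add_one_div_sub_one_sq_sub_one hn'.ne', mul_div_assoc', div_le_iff₀ (pow_pos hn1 2)]
    at key
  rw [le_div_iff₀ (mul_pos (pow_pos hc 2) (by linarith))]
  linear_combination key

theorem stmt_16 (n : ℕ) (hn : 2 ≤ n) (σ R' : ℝ) (hσ : 0 ≤ σ) (hR' : 0 < R')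
    (a A : ℝ) (ha : 0 < a) (hA : 0 ≤ A)
    (haval : a = Real.sqrt (n * (n + σ * A)) / (2 * R'))
    (h : a * (1 + 1 / ((n : ℝ) - 1)) ≤
      Real.sqrt (n * (n + σ * (A + a))) / (2 * R')) :
    a ≤ n * ((n : ℝ) - 1) ^ 2 * σ / ((2 * R') ^ 2 * (2 * n - 1)) :=
  stmt_16_general n hn σ R' hR' a A ha haval h
end
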